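/- In the lattice Pic, the anti-canonical class satisfies the identity −K = D0 + 2·D1 + D2 + D3 + 2·D4 + D5 + 3·D6 + D7 + 2·D8 + D9 + 2·D10 + 2·D11 + 2·D12. (This is the decomposition of the anti-canonical divisor of the space of initial values of the Hietarinta–Viallet equation into its irreducible components with multiplicities.) -/
import Mathlib


/-- The Picard lattice of the space of initial values of the HV equation:
the free ℤ-module of rank 16 with basis `H0, H1, E1, …, E14`. -/
abbrev Pic : Type := Fin 16 → ℤ

/-- The class `H0` (total transform of a line `x = const`). -/
def H0 : Pic := Pi.single 0 1

/-- The class `H1` (total transform of a line `y = const`). -/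
def H1 : Pic := Pi.single 1 1

/-- The exceptional classes: `E k` is the paper's `E_{k+1}` for `k : Fin 14`. -/
def E (k : Fin 14) : Pic := Pi.single k.succ.succ 1

/-- The intersection form: `H0·H1 = 1`, `H0·H0 = H1·H1 = 0`, `Ek·El = -δ`, `Hi·Ek = 0`. -/
def ip (u v : Pic) : ℤ :=
  u 0 * v 1 + u 1 * v 0 - ∑ k : Fin 14, u k.succ.succ * v k.succ.succ

/-- The canonical class `K = -2H0 - 2H1 + E1 + ⋯ + E14`. -/
def KX : Pic := (-2 : ℤ) • H0 + (-2 : ℤ) • H1 + ∑ k : Fin 14, E k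

/-- The classes `D0, …, D12` of the irreducible components of `-K`. -/
def D : Fin 13 → Pic :=
  ![E 0 - E 1, E 1 - E 2, E 2 - E 3,
    E 4 - E 5, E 5 - E 6, E 6 - E 7,
    E 8 - E 9, E 10 - E 11, E 11 - E 12, E 12 - E 13,
    H0 - E 0 - E 1 - E 8, H1 - E 4 - E 5 - E 8, E 9 - E 10 - E 11]

/-- The root basis `α1, α2, α3` of the orthogonal complement of the `D`'s. -/
def α : Fin 3 → Pic :=
  ![(2 : ℤ) • H1 - E 0 - E 1 - E 2 - E 3,
    (2 : ℤ) • H0 - E 4 - E 5 - E 6 - E 7,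
    (2 : ℤ) • H0 + (2 : ℤ) • H1 - (2 : ℤ) • E 8 - (2 : ℤ) • E 9 - E 10 - E 11 - E 12 - E 13]

/-- The ℤ-linear map sending the `j`-th basis vector to `f j`. -/
def ofImages (f : Fin 16 → Pic) : Pic →ₗ[ℤ] Pic :=
  Matrix.toLin' (Matrix.of fun i j => f j i)

/-- The generator `w1`. -/
def w1 : Pic →ₗ[ℤ] Pic := ofImages
  ![H0 + (2 : ℤ) • H1 - E 0 - E 1 - E 2 - E 3, H1,
    H1 - E 3, H1 - E 2, H1 - E 1, H1 - E 0,
    E 4, E 5, E 6, E 7, E 8, E 9, E 10, E 11, E 12, E 13]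

/-- The generator `w2`. -/
def w2 : Pic →ₗ[ℤ] Pic := ofImages
  ![H0, (2 : ℤ) • H0 + H1 - E 4 - E 5 - E 6 - E 7,
    E 0, E 1, E 2, E 3,
    H0 - E 7, H0 - E 6, H0 - E 5, H0 - E 4,
    E 8, E 9, E 10, E 11, E 12, E 13]

/-- The generator `w3`. -/
def w3 : Pic →ₗ[ℤ] Pic := ofImages
  ![H0 + α 2, H1 + α 2,
    E 0, E 1, E 2, E 3, E 4, E 5, E 6, E 7,
    E 8 + α 2, E 9 + α 2,
    E 10 + (H0 + H1 - E 8 - E 9 - E 10 - E 13),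
    E 11 + (H0 + H1 - E 8 - E 9 - E 11 - E 12),
    E 12 + (H0 + H1 - E 8 - E 9 - E 11 - E 12),
    E 13 + (H0 + H1 - E 8 - E 9 - E 10 - E 13)]

/-- The generator `σ12`. -/
def s12 : Pic →ₗ[ℤ] Pic := ofImages
  ![H1, H0, E 4, E 5, E 6, E 7, E 0, E 1, E 2, E 3,
    E 8, E 9, E 10, E 11, E 12, E 13]

/-- The generator `σ13`. -/
def s13 : Pic →ₗ[ℤ] Pic := ofImages
  ![H0, H0 + H1 - E 8 - E 9,
    E 10, E 11, E 12, E 13,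
    E 4, E 5, E 6, E 7,
    H0 - E 9, H0 - E 8,
    E 0, E 1, E 2, E 3]

/-- The action `φ` of the Hietarinta–Viallet equation on the Picard lattice. -/
def phiHV : Pic →ₗ[ℤ] Pic := ofImages
  ![(3 : ℤ) • H0 + H1 - E 4 - E 5 - E 6 - E 7 - E 8 - E 9, H0,
    H0 - E 7, H0 - E 6, H0 - E 5, H0 - E 4,
    E 10, E 11, E 12, E 13,
    H0 - E 9, H0 - E 8,
    E 0, E 1, E 2, E 3]

/-- The anti-canonical class decomposes into the irreducible components `D0, …, D12`
with multiplicities `1,2,1,1,2,1,3,1,2,1,2,2,2`. -/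
theorem antiCanonical_decomposition :
    -KX = D 0 + (2 : ℤ) • D 1 + D 2 + D 3 + (2 : ℤ) • D 4 + D 5 + (3 : ℤ) • D 6 + D 7 +
      (2 : ℤ) • D 8 + D 9 + (2 : ℤ) • D 10 + (2 : ℤ) • D 11 + (2 : ℤ) • D 12 := by
  funext i
  simp [KX, D, H0, H1, E, Fin.sum_univ_succ]
  fin_cases i <;> decide
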